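/- For integer y with 0 ≤ y ≤ 2m+1 and generic z, the function k ↦ (y+z+1/2)_k (z+m+1)_k / ((y/2+z+1/2)_k (y/2+z+1)_k) agrees with a polynomial in k of degree exactly m. -/

import Mathlib

/-- The rising factorial (Pochhammer symbol) `(a)_k`. -/
noncomputable def rf (a : ℂ) (k : ℕ) : ℂ := (ascPochhammer ℂ k).eval a

lemma rf_add (a : ℂ) (n k : ℕ) : rf a (n + k) = rf a n * rf (a + n) k := by
  rw [rf, ← ascPochhammer_mul]
  simp [rf, Polynomial.eval_comp]

lemma rf_key (b : ℂ) (n k : ℕ) : rf b n * rf (b + n) k = rf b k * rf (b + k) n := by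
  rw [← rf_add, ← rf_add, Nat.add_comm]

noncomputable def Q (b : ℂ) (n : ℕ) : Polynomial ℂ :=
  (ascPochhammer ℂ n).comp (Polynomial.X + Polynomial.C b)

lemma Q_eval (b : ℂ) (n : ℕ) (x : ℂ) : (Q b n).eval x = rf (b + x) n := by
  simp [Q, rf, Polynomial.eval_comp, add_comm]

lemma Q_degree (b : ℂ) (n : ℕ) : (Q b n).degree = n := by
  rcases Nat.eq_zero_or_pos n with rfl | hn
  · simp [Q]
  have hm : (Q b n).Monic := by
    apply (monic_ascPochhammer ℂ n).comp (Polynomial.monic_X_add_C b)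
    simp
  rw [Polynomial.degree_eq_natDegree hm.ne_zero, Q, Polynomial.natDegree_comp]
  simp [ascPochhammer_natDegree]

lemma main_lemma (b1 b2 : ℂ) (n1 n2 m : ℕ) (hm : n1 + n2 = m)
    (h1 : ∀ k ≤ 2 * m + 1, rf b1 k ≠ 0) (h2 : ∀ k ≤ 2 * m + 1, rf b2 k ≠ 0) :
    ∃ P : Polynomial ℂ, P.degree = m ∧
      ∀ k ≤ 2 * m + 1,
        P.eval (k : ℂ) = rf (b1 + n1) k * rf (b2 + n2) k / (rf b1 k * rf b2 k) := by
  have hb1 : rf b1 n1 ≠ 0 := h1 n1 (by omega)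
  have hb2 : rf b2 n2 ≠ 0 := h2 n2 (by omega)
  refine ⟨Polynomial.C ((rf b1 n1 * rf b2 n2)⁻¹) * (Q b1 n1 * Q b2 n2), ?_, ?_⟩
  · rw [Polynomial.degree_C_mul (by simp [hb1, hb2]), Polynomial.degree_mul,
      Q_degree, Q_degree]
    norm_cast
  · intro k hk
    have k1 := h1 k hk
    have k2 := h2 k hk
    have e1 := rf_key b1 n1 k
    have e2 := rf_key b2 n2 k
    simp only [Polynomial.eval_mul, Polynomial.eval_C, Q_eval]
    field_simp
    rw [show rf b1 n1 * rf b2 n2 * rf (b1 + n1) k * rf (b2 + n2) k =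
      (rf b1 n1 * rf (b1 + n1) k) * (rf b2 n2 * rf (b2 + n2) k) by ring, e1, e2]
    ring

theorem P2_is_poly_of_degree_m (m y : ℕ) (hy : y ≤ 2 * m + 1) (z : ℂ)
    (h1 : ∀ k ≤ 2 * m + 1, rf ((y : ℂ) / 2 + z + 1 / 2) k ≠ 0)
    (h2 : ∀ k ≤ 2 * m + 1, rf ((y : ℂ) / 2 + z + 1) k ≠ 0) :
    ∃ P : Polynomial ℂ, P.degree = m ∧
      ∀ k ≤ 2 * m + 1,
        P.eval (k : ℂ) =
          rf ((y : ℂ) + z + 1 / 2) k * rf (z + m + 1) k /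
            (rf ((y : ℂ) / 2 + z + 1 / 2) k * rf ((y : ℂ) / 2 + z + 1) k) := by
  rcases Nat.even_or_odd y with ⟨t, ht⟩ | ⟨t, ht⟩
  · -- y = 2t, t ≤ m
    have htm : t ≤ m := by omega
    obtain ⟨P, hP, hPe⟩ := main_lemma ((y : ℂ) / 2 + z + 1 / 2) ((y : ℂ) / 2 + z + 1)
      t (m - t) m (by omega) h1 h2
    refine ⟨P, hP, fun k hk => ?_⟩
    rw [hPe k hk]
    have hyc : (y : ℂ) = 2 * t := by push_cast [ht]; ring
    have hmt : ((m - t : ℕ) : ℂ) = (m : ℂ) - t := by push_cast [Nat.cast_sub htm]; ring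
    rw [hyc, hmt]
    ring_nf
  · -- y = 2t+1, t ≤ m
    have htm : t ≤ m := by omega
    obtain ⟨P, hP, hPe⟩ := main_lemma ((y : ℂ) / 2 + z + 1 / 2) ((y : ℂ) / 2 + z + 1)
      (m - t) t m (by omega) h1 h2
    refine ⟨P, hP, fun k hk => ?_⟩
    rw [hPe k hk]
    have hyc : (y : ℂ) = 2 * t + 1 := by push_cast [ht]; ring
    have hmt : ((m - t : ℕ) : ℂ) = (m : ℂ) - t := by push_cast [Nat.cast_sub htm]; ring
    rw [hyc, hmt]
    ring_nf
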